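/- arXiv:1710.02200 — 2 statements merged into one kernel-verified Lean document; each statement's English description precedes it below -/
import Mathlib

section
/- Let A be a unital C*-algebra and let S be a set of selfadjoint elements of A each of which lies in the center of A. If b is a selfadjoint element of A that is a least upper bound of S with respect to the canonical partial order on selfadjoint elements (a ≤ c iff c − a is positive), then b lies in the center of A. -/
/-! Conjugation by a unitary `u` preserves the order and fixes every central element, so it
maps the least upper bound `b` of a set of central elements to an upper bound of the same
set: `b ≤ u b u⋆` for every unitary `u`. Applied to `u⋆` and conjugated back, this gives
equality, so `b` commutes with every unitary, and a unital C⋆-algebra is spanned by its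
unitaries. -/

section StarOrderedRing

variable {R : Type*} [Semiring R] [PartialOrder R] [StarRing R] [StarOrderedRing R]
  {S : Set R} {b : R} (hS : ∀ a ∈ S, a ∈ Set.center R) (hb_sa : IsSelfAdjoint b)
  (hb_ub : ∀ a ∈ S, a ≤ b)
  (hb_least : ∀ c : R, IsSelfAdjoint c → (∀ a ∈ S, a ≤ c) → b ≤ c)
include hS hb_sa hb_ub hb_least

lemma le_unitary_conj_of_isLUB_of_central {u : R} (hu : u ∈ unitary R) : b ≤ u * b * star u :=
  hb_least _ (hb_sa.conjugate u) fun a ha => by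
    have hfix : u * a * star u = a := (commute_unitary_iff_star_right_conjugate hu).mp
      ((Set.mem_center_iff.mp (hS a ha)).comm u).symm
    simpa only [hfix] using star_right_conjugate_le_conjugate (hb_ub a ha) u

lemma commute_unitary_of_isLUB_of_central {u : R} (hu : u ∈ unitary R) : Commute u b := by
  refine (commute_unitary_iff_star_right_conjugate hu).mpr (le_antisymm ?_
    (le_unitary_conj_of_isLUB_of_central hS hb_sa hb_ub hb_least hu))
  calc u * b * star u ≤ u * (star u * b * u) * star u := by
        refine star_right_conjugate_le_conjugate ?_ u
        simpa only [star_star] using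
          le_unitary_conj_of_isLUB_of_central hS hb_sa hb_ub hb_least (Unitary.star_mem hu)
    _ = b := by
        rw [← mul_assoc, ← mul_assoc, Unitary.mul_star_self_of_mem hu, one_mul, mul_assoc,
          Unitary.mul_star_self_of_mem hu, mul_one]

end StarOrderedRing

lemma CStarAlgebra.mem_center_of_forall_commute_unitary {A : Type*} [CStarAlgebra A] {b : A}
    (hb : ∀ u ∈ unitary A, Commute u b) : b ∈ Set.center A := by
  have hspan : Submodule.span ℂ (unitary A : Set A) ≤
      (Subalgebra.centralizer ℂ {b}).toSubmodule :=
    Submodule.span_le.mpr fun u hu => by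
      rintro _ rfl
      exact (hb u hu).symm
  rw [CStarAlgebra.span_unitary] at hspan
  exact Semigroup.mem_center_iff.mpr fun g =>
    ((Subalgebra.mem_centralizer_iff ℂ).mp (hspan Submodule.mem_top) b rfl).symm

theorem central_of_isLUB_of_central_general {A : Type*} [CStarAlgebra A]
    [PartialOrder A] [StarOrderedRing A]
    (S : Set A) (hS_central : ∀ a ∈ S, a ∈ Set.center A)
    (b : A) (hb_sa : IsSelfAdjoint b)
    (hb_ub : ∀ a ∈ S, a ≤ b)
    (hb_least : ∀ c : A, IsSelfAdjoint c → (∀ a ∈ S, a ≤ c) → b ≤ c) :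
    b ∈ Set.center A :=
  CStarAlgebra.mem_center_of_forall_commute_unitary fun _ hu =>
    commute_unitary_of_isLUB_of_central hS_central hb_sa hb_ub hb_least hu

/-- Let `A` be a unital C*-algebra and let `S` be a set of selfadjoint
elements of `A`, each of which lies in the center of `A`.  If `b` is a selfadjoint element
of `A` that is a least upper bound of `S` with respect to the canonical partial order on
selfadjoint elements (i.e. `b` is an upper bound of `S`, and `b ≤ c` for every selfadjoint
upper bound `c` of `S`), then `b` lies in the center of `A`. -/
theorem central_of_isLUB_of_central {A : Type*} [CStarAlgebra A]
    [PartialOrder A] [StarOrderedRing A]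
    (S : Set A) (hS_sa : ∀ a ∈ S, IsSelfAdjoint a) (hS_central : ∀ a ∈ S, a ∈ Set.center A)
    (b : A) (hb_sa : IsSelfAdjoint b)
    (hb_ub : ∀ a ∈ S, a ≤ b)
    (hb_least : ∀ c : A, IsSelfAdjoint c → (∀ a ∈ S, a ≤ c) → b ≤ c) :
    b ∈ Set.center A :=
  central_of_isLUB_of_central_general S hS_central b hb_sa hb_ub hb_least
end

section
/- Let A be a unital C*-algebra, G a group, and α : G → Aut(A) a group homomorphism into the group of *-algebra automorphisms of A. Suppose that for each s ∈ G we are given p_s ∈ A, a central projection of A, and u_s ∈ A satisfying (u_s)* u_s = u_s (u_s)* = p_s and u_s b (u_s)* = α_s(b) p_s for all b ∈ A. Then for all s, t ∈ G the element σ(s,t) := u_s u_t (u_{st})* lies in the center of A, i.e., it commutes with every element of A. -/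
/-- Let `A` be a unital C*-algebra, `G` a group, and `α` a group
homomorphism from `G` into the group of *-algebra automorphisms of `A`.  Suppose that for
each `s ∈ G` we are given a central projection `p s` of `A` and an element `u s ∈ A`
satisfying `(u s)* * u s = u s * (u s)* = p s` and `u s * b * (u s)* = α s b * p s` for all
`b ∈ A`.  Then for all `s, t ∈ G` the element `σ(s,t) := u s * u t * (u (s*t))*` lies in
the center of `A`. -/
theorem partial_cocycle_mem_center
    {A : Type*} [CStarAlgebra A] {G : Type*} [Group G]
    (α : G → (A ≃⋆ₐ[ℂ] A))
    (hα_one : ∀ a : A, α 1 a = a)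
    (hα_mul : ∀ (s t : G) (a : A), α (s * t) a = α s (α t a))
    (p : G → A) (u : G → A)
    (hp_sa : ∀ s, IsSelfAdjoint (p s)) (hp_idem : ∀ s, p s * p s = p s)
    (hp_central : ∀ s, p s ∈ Set.center A)
    (hu₁ : ∀ s, star (u s) * u s = p s) (hu₂ : ∀ s, u s * star (u s) = p s)
    (hu_imp : ∀ (s : G) (b : A), u s * b * star (u s) = α s b * p s) :
    ∀ s t : G, u s * u t * star (u (s * t)) ∈ Set.center A := by
  -- p s commutes with everything
  have hpc : ∀ s (b : A), p s * b = b * p s := fun s b =>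
    ((Semigroup.mem_center_iff.mp (hp_central s)) b).symm
  -- u s * p s = u s, via the C*-identity
  have hup : ∀ s, u s * p s = u s := by
    intro s
    have h0 : star (u s * p s - u s) * (u s * p s - u s) = 0 := by
      have hps : star (p s) = p s := hp_sa s
      simp only [star_sub, star_mul, hps]
      rw [sub_mul, mul_sub, mul_sub]
      have h1 : p s * star (u s) * (u s * p s) = p s := by
        rw [mul_assoc, ← mul_assoc (star (u s)), hu₁, ← mul_assoc, hp_idem, hp_idem]
      have h2 : p s * star (u s) * u s = p s := by
        rw [mul_assoc, hu₁, hp_idem]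
      have h3 : star (u s) * (u s * p s) = p s := by
        rw [← mul_assoc, hu₁, hp_idem]
      rw [h1, h2, h3, hu₁ s]
      abel
    exact sub_eq_zero.mp (CStarRing.star_mul_self_eq_zero_iff _ |>.mp h0)
  have hpu : ∀ s, p s * u s = u s := fun s => by rw [hpc, hup]
  have hpus : ∀ s, p s * star (u s) = star (u s) := by
    intro s
    have := congrArg star (hup s)
    rwa [star_mul, (hp_sa s).star_eq] at this
  -- K' : u s * b = α s b * u s
  have hK : ∀ s (b : A), u s * b = α s b * u s := by
    intro s b
    have h1 : u s * b * star (u s) * u s = α s b * p s * u s := by rw [hu_imp]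
    rw [mul_assoc (u s * b), hu₁, mul_assoc (α s b), hpu] at h1
    calc u s * b = u s * p s * b := by rw [hup]
      _ = u s * (b * p s) := by rw [mul_assoc, hpc]
      _ = u s * b * p s := by rw [mul_assoc]
      _ = α s b * u s := h1
  -- K'' : star (u r) * b = α r⁻¹ b * star (u r)
  have hKs : ∀ r (b : A), star (u r) * b = α r⁻¹ b * star (u r) := by
    intro r b
    have h1 : u r * (α r⁻¹ (star b)) = star b * u r := by
      rw [hK, ← hα_mul, mul_inv_cancel, hα_one]
    have h2 := congrArg star h1
    rw [star_mul, star_mul, map_star, star_star, star_star] at h2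
    exact h2.symm
  intro s t
  rw [Semigroup.mem_center_iff]
  intro b
  symm
  calc u s * u t * star (u (s * t)) * b
      = u s * (u t * (α (s * t)⁻¹ b * star (u (s * t)))) := by
        rw [mul_assoc, mul_assoc, hKs]
    _ = u s * (α t (α (s * t)⁻¹ b) * (u t * star (u (s * t)))) := by
        rw [← mul_assoc (u t), hK t, mul_assoc]
    _ = α s (α t (α (s * t)⁻¹ b)) * (u s * (u t * star (u (s * t)))) := by
        rw [← mul_assoc (u s), hK s, mul_assoc]
    _ = b * (u s * u t * star (u (s * t))) := by
        rw [← hα_mul, ← hα_mul, mul_inv_cancel, hα_one, mul_assoc]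
end
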